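/- arXiv:2509.21835 — 3 statements merged into one kernel-verified Lean document; each statement's English description precedes it below -/
import Mathlib

section
/- Under Assumption [A2], for every s > 0, every y ∈ Y, every coordinate i with y_i = K, and every token k ∈ {1,…,K−1}, one has q_s(y) > 0 and the discrete score (density ratio) satisfies q_s(y[i→k]) / q_s(y) ≤ 1 / (e^{s} − 1). -/
open Matrix Finset

/-- The mask token: token `K` in the vocabulary `{1,…,K}`, modeled as the last
element of `Fin K`. -/
def maskTok (K : ℕ) [NeZero K] : Fin K :=
  ⟨K - 1, Nat.sub_lt (Nat.pos_of_ne_zero (NeZero.ne K)) Nat.one_pos⟩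

/-- The number of mask tokens in a sequence. -/
def numK (K d : ℕ) [NeZero K] (y : Fin d → Fin K) : ℕ :=
  (Finset.univ.filter fun i => y i = maskTok K).card

/-- Hamming distance between two sequences. -/
def ham {K d : ℕ} (y y' : Fin d → Fin K) : ℕ :=
  (Finset.univ.filter fun i => y i ≠ y' i).card

/-- The masked (absorbing) forward transition-rate matrix: `R y y' = 1` if
`Ham(y,y') = 1` and the differing coordinate of `y` is the mask token,
`R y' y' = -(d - numK y')`, and `0` otherwise. -/
noncomputable def fwdRate (K d : ℕ) [NeZero K] :
    Matrix (Fin d → Fin K) (Fin d → Fin K) ℝ := fun y y' =>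
  if y = y' then -((d : ℝ) - (numK K d y' : ℝ))
  else if ham y y' = 1 ∧ ∀ i, y i ≠ y' i → y i = maskTok K then 1 else 0

/-- The forward marginal at time `t`: `q_t = exp(tR) · q₀`. -/
noncomputable def qt (K d : ℕ) [NeZero K] (q0 : (Fin d → Fin K) → ℝ) (t : ℝ) :
    (Fin d → Fin K) → ℝ :=
  NormedSpace.exp (t • fwdRate K d) *ᵥ q0

/-!
Let `S(y)` be the `q₀`-mass of the clean sequences that agree with `y` off its masked
coordinates. On functions of the form `y ↦ g(numK y) · S(y)` the rate matrix acts through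
`g(m) ↦ -(d - m) g(m) + m g(m - 1)`, so `u_l(y) = (-1)^(l+m) C(m,l) S(y)` (with `m = numK y`)
is an eigenvector of eigenvalue `-(d - l)`. By the binomial theorem
`∑ₗ xˡ u_l(y) = (x - 1)^m S(y)`: at `x = 1` this is `q₀` by [A2], and at `x = eᵗ` it gives
`q_t(y) = e^(-td) (eᵗ - 1)^m S(y)`. Unmasking a coordinate lowers `m` by one and does not
increase `S`, which yields the bound; `K ≥ 2` makes `S` positive.
-/
open Function

theorem Matrix.exp_mulVec_of_mulVec_eq_smul {n : Type*} [Fintype n] [DecidableEq n]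
    {A : Matrix n n ℝ} {w : n → ℝ} {μ : ℝ} (h : A *ᵥ w = μ • w) :
    NormedSpace.exp A *ᵥ w = Real.exp μ • w := by
  let _ : NormedRing (Matrix n n ℝ) := Matrix.linftyOpNormedRing
  let _ : NormedAlgebra ℝ (Matrix n n ℝ) := Matrix.linftyOpNormedAlgebra
  have hpow (m : ℕ) : A ^ m *ᵥ w = μ ^ m • w := by
    induction m with
    | zero => simp
    | succ m ih => rw [pow_succ', ← mulVec_mulVec, ih, mulVec_smul, h, smul_smul, ← pow_succ]
  have hA := (NormedSpace.exp_series_hasSum_exp' (𝕂 := ℝ) A).map (mulVec.addMonoidHomLeft w)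
    (continuous_id.matrix_mulVec continuous_const)
  have hμ := (NormedSpace.exp_series_hasSum_exp' (𝕂 := ℝ) μ).smul_const w
  rw [← Real.exp_eq_exp_ℝ] at hμ
  refine hA.unique (hμ.congr_fun fun m => ?_)
  simp [mulVec.addMonoidHomLeft, smul_mulVec, hpow, smul_smul]

theorem Nat.cast_sub_mul_choose {R : Type*} [CommRing R] (m l : ℕ) :
    ((m : R) - l) * m.choose l = m * (m - 1).choose l := by
  rcases m with _ | n
  · rcases l with _ | l <;> simp
  · rcases le_or_gt l (n + 1) with hl | hl
    · have key := congrArg (Nat.cast : ℕ → R) (Nat.choose_mul_succ_eq n l)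
      push_cast [Nat.cast_sub hl] at key
      rw [Nat.add_sub_cancel]
      push_cast
      linear_combination -key
    · simp [Nat.choose_eq_zero_of_lt hl, Nat.choose_eq_zero_of_lt (Nat.lt_of_succ_lt hl)]

section
variable {ι α : Type*} [Fintype ι] [DecidableEq ι] [DecidableEq α]

theorem card_filter_ne_eq_one_iff {y y' : ι → α} :
    #{i | y i ≠ y' i} = 1 ↔ ∃ j k, y j ≠ k ∧ update y j k = y' := by
  rw [card_eq_one]
  constructor
  · rintro ⟨j, hj⟩
    have hmem (i : ι) : y i ≠ y' i ↔ i = j := by simpa using Finset.ext_iff.mp hj i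
    refine ⟨j, y' j, (hmem j).mpr rfl, funext fun i => ?_⟩
    by_cases hij : i = j
    · subst hij; simp
    · rw [update_of_ne hij]; exact not_not.mp (mt (hmem i).mp hij)
  · rintro ⟨j, k, hj, rfl⟩
    refine ⟨j, Finset.ext fun i => ?_⟩
    by_cases hij : i = j
    · subst hij; simpa using hj
    · simp [hij]

end

section
variable {K d : ℕ} [NeZero K]

theorem numK_eq_zero_iff {y : Fin d → Fin K} : numK K d y = 0 ↔ ∀ j, y j ≠ maskTok K := by
  simp [numK, filter_eq_empty_iff]

theorem numK_le (y : Fin d → Fin K) : numK K d y ≤ d :=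
  (card_filter_le _ _).trans (by simp)

theorem numK_pos_of_mask {y : Fin d → Fin K} {i : Fin d} (hi : y i = maskTok K) :
    0 < numK K d y :=
  card_pos.mpr ⟨i, by simp [hi]⟩

theorem numK_update_of_mask {y : Fin d → Fin K} {i : Fin d} {k : Fin K}
    (hi : y i = maskTok K) (hk : k ≠ maskTok K) :
    numK K d (update y i k) = numK K d y - 1 := by
  have : ({j | update y i k j = maskTok K} : Finset (Fin d)) =
      ({j | y j = maskTok K} : Finset (Fin d)).erase i := by
    ext j
    by_cases hj : j = i
    · subst hj; simp [hk]
    · simp [hj]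
  rw [numK, this, card_erase_of_mem (by simp [hi]), numK]

def unmaskings (y : Fin d → Fin K) : Finset (Fin d × Fin K) :=
  ({j | y j = maskTok K} : Finset (Fin d)) ×ˢ ({k | k ≠ maskTok K} : Finset (Fin K))

theorem mem_unmaskings {y : Fin d → Fin K} {p : Fin d × Fin K} :
    p ∈ unmaskings y ↔ y p.1 = maskTok K ∧ p.2 ≠ maskTok K := by
  simp [unmaskings]

theorem fwdRate_parent_iff {y y' : Fin d → Fin K} :
    (ham y y' = 1 ∧ ∀ i, y i ≠ y' i → y i = maskTok K) ↔
      ∃ p ∈ unmaskings y, update y p.1 p.2 = y' := by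
  simp only [ham, card_filter_ne_eq_one_iff, mem_unmaskings, Prod.exists]
  constructor
  · rintro ⟨⟨j, k, hjk, rfl⟩, hmask⟩
    have hj := hmask j (by simpa using hjk)
    exact ⟨j, k, ⟨hj, fun h => hjk (hj.trans h.symm)⟩, rfl⟩
  · rintro ⟨j, k, ⟨hj, hk⟩, rfl⟩
    refine ⟨⟨j, k, fun h => hk (h ▸ hj), rfl⟩, fun i hi => ?_⟩
    by_cases hij : i = j
    · exact hij ▸ hj
    · simp [hij] at hi

theorem update_injOn_unmaskings (y : Fin d → Fin K) :
    Set.InjOn (fun p : Fin d × Fin K => update y p.1 p.2) (unmaskings y) := by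
  rintro ⟨j, k⟩ hjk ⟨j', k'⟩ hjk' heq
  rw [mem_coe, mem_unmaskings] at hjk hjk'
  have hj : j = j' := by
    by_contra hne
    have := congrFun heq j
    simp only [update_self, update_of_ne hne] at this
    exact hjk.2 (this.trans hjk.1)
  subst hj
  simpa using congrFun heq j

theorem fwdRate_mulVec_apply (f : (Fin d → Fin K) → ℝ) (y : Fin d → Fin K) :
    (fwdRate K d *ᵥ f) y = -((d : ℝ) - numK K d y) * f y +
      ∑ p ∈ unmaskings y, f (update y p.1 p.2) := by
  have hsplit (y' : Fin d → Fin K) : fwdRate K d y y' * f y' =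
      (if y = y' then -((d : ℝ) - numK K d y) * f y else 0) +
        if ham y y' = 1 ∧ ∀ i, y i ≠ y' i → y i = maskTok K then f y' else 0 := by
    by_cases h : y = y'
    · subst h; simp [fwdRate, ham]
    · simp only [fwdRate, h, if_false]; split_ifs <;> simp
  have hparents : ({y' | ham y y' = 1 ∧ ∀ i, y i ≠ y' i → y i = maskTok K} :
      Finset (Fin d → Fin K)) = (unmaskings y).image fun p => update y p.1 p.2 := by
    ext y'; simp only [mem_filter, mem_univ, true_and, mem_image, fwdRate_parent_iff]
  rw [mulVec, dotProduct, sum_congr rfl fun y' _ => hsplit y', sum_add_distrib,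
    sum_ite_eq, if_pos (mem_univ _), ← sum_filter, hparents,
    sum_image (update_injOn_unmaskings y)]

end

section
variable {K d : ℕ} [NeZero K] (q0 : (Fin d → Fin K) → ℝ)

noncomputable def cleanMass (y : Fin d → Fin K) : ℝ :=
  ∑ x with numK K d x = 0 ∧ ∀ j, y j ≠ maskTok K → x j = y j, q0 x

theorem cleanMass_of_numK_eq_zero {y : Fin d → Fin K} (hy : numK K d y = 0) :
    cleanMass q0 y = q0 y := by
  have : ({x | numK K d x = 0 ∧ ∀ j, y j ≠ maskTok K → x j = y j} :
      Finset (Fin d → Fin K)) = {y} := by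
    ext x
    simp only [mem_filter, mem_univ, true_and, mem_singleton]
    refine ⟨fun ⟨_, hx⟩ => funext fun j => hx j (numK_eq_zero_iff.mp hy j), ?_⟩
    rintro rfl
    exact ⟨hy, fun _ _ => rfl⟩
  rw [cleanMass, this, sum_singleton]

theorem sum_cleanMass_update {y : Fin d → Fin K} {i : Fin d} (hi : y i = maskTok K) :
    ∑ k with k ≠ maskTok K, cleanMass q0 (update y i k) = cleanMass q0 y := by
  have hmaps : ∀ x ∈ ({x | numK K d x = 0 ∧ ∀ j, y j ≠ maskTok K → x j = y j} :
      Finset (Fin d → Fin K)), x i ∈ ({k | k ≠ maskTok K} : Finset (Fin K)) := by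
    intro x hx
    simp only [mem_filter, mem_univ, true_and] at hx ⊢
    exact numK_eq_zero_iff.mp hx.1 i
  rw [cleanMass, ← sum_fiberwise_of_maps_to hmaps]
  refine sum_congr rfl fun k hk => ?_
  rw [cleanMass, filter_filter]
  congr 1
  ext x
  simp only [mem_filter, mem_univ, true_and] at hk ⊢
  rw [and_assoc]
  refine and_congr_right fun _ => ⟨fun hx => ⟨fun j hj => ?_, ?_⟩, fun ⟨hx, hxi⟩ j hj => ?_⟩
  · have hji : j ≠ i := by rintro rfl; exact hj hi
    simpa [hji] using hx j (by simpa [hji] using hj)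
  · simpa using hx i (by simpa using hk)
  · by_cases hji : j = i
    · subst hji; simpa using hxi
    · simpa [hji] using hx j (by simpa [hji] using hj)

variable {q0}

theorem cleanMass_update_le (hq0 : ∀ x, 0 ≤ q0 x) {y : Fin d → Fin K} {i : Fin d}
    (hi : y i = maskTok K) (k : Fin K) :
    cleanMass q0 (update y i k) ≤ cleanMass q0 y := by
  refine sum_le_sum_of_subset_of_nonneg (fun x hx => ?_) fun x _ _ => hq0 x
  simp only [mem_filter, mem_univ, true_and] at hx ⊢
  refine ⟨hx.1, fun j hj => ?_⟩
  have hji : j ≠ i := by rintro rfl; exact hj hi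
  simpa [hji] using hx.2 j (by simpa [hji] using hj)

theorem cleanMass_pos (hK : 2 ≤ K) (hq0 : ∀ x, 0 ≤ q0 x)
    (hclean : ∀ x, numK K d x = 0 → 0 < q0 x) (y : Fin d → Fin K) :
    0 < cleanMass q0 y := by
  let t : Fin K := ⟨0, by omega⟩
  have ht : t ≠ maskTok K := by
    intro h
    have := congrArg Fin.val h
    simp [t, maskTok] at this
    omega
  let x : Fin d → Fin K := fun j => if y j = maskTok K then t else y j
  have hx : numK K d x = 0 := numK_eq_zero_iff.mpr fun j => by
    by_cases h : y j = maskTok K <;> simp [x, h, ht]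
  refine (hclean x hx).trans_le (single_le_sum (fun x _ => hq0 x) ?_)
  simp only [mem_filter, mem_univ, true_and]
  exact ⟨hx, fun j hj => by simp [x, hj]⟩

end

section
variable {K d : ℕ} [NeZero K] (q0 : (Fin d → Fin K) → ℝ)

theorem fwdRate_mulVec_numK_mul_cleanMass (g : ℕ → ℝ) (y : Fin d → Fin K) :
    (fwdRate K d *ᵥ fun x => g (numK K d x) * cleanMass q0 x) y =
      (-((d : ℝ) - numK K d y) * g (numK K d y) + numK K d y * g (numK K d y - 1)) *
        cleanMass q0 y := by
  have hinner (j : Fin d) (hj : y j = maskTok K) :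
      ∑ k with k ≠ maskTok K, g (numK K d (update y j k)) * cleanMass q0 (update y j k) =
        g (numK K d y - 1) * cleanMass q0 y := by
    rw [← sum_cleanMass_update q0 hj, mul_sum]
    refine sum_congr rfl fun k hk => ?_
    rw [numK_update_of_mask hj (mem_filter.mp hk).2]
  rw [fwdRate_mulVec_apply, unmaskings, sum_product,
    sum_congr rfl fun j hj => hinner j (mem_filter.mp hj).2, sum_const]
  simp only [nsmul_eq_mul, numK]
  ring

noncomputable def maskEigenvector (l : ℕ) (y : Fin d → Fin K) : ℝ :=
  (-1) ^ (l + numK K d y) * (numK K d y).choose l * cleanMass q0 y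

theorem fwdRate_mulVec_maskEigenvector (l : ℕ) :
    fwdRate K d *ᵥ maskEigenvector q0 l = (-((d : ℝ) - l)) • maskEigenvector q0 l := by
  funext y
  have h := fwdRate_mulVec_numK_mul_cleanMass q0 (fun m => (-1) ^ (l + m) * (m.choose l : ℝ)) y
  change (fwdRate K d *ᵥ maskEigenvector q0 l) y = _ at h
  rw [h, Pi.smul_apply, smul_eq_mul, maskEigenvector]
  rcases numK K d y with _ | m
  · rcases l with _ | l <;> simp
  · have key := Nat.cast_sub_mul_choose (R := ℝ) (m + 1) l
    rw [Nat.add_sub_cancel, ← add_assoc, pow_succ]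
    push_cast at key ⊢
    linear_combination (-(-1 : ℝ) ^ (l + m) * cleanMass q0 y) * key

theorem sum_pow_smul_maskEigenvector (x : ℝ) :
    ∑ l ∈ range (d + 1), x ^ l • maskEigenvector q0 l =
      fun y => (x - 1) ^ numK K d y * cleanMass q0 y := by
  funext y
  have hm := numK_le y
  rw [Finset.sum_apply, sub_pow, sum_mul]
  refine (sum_subset (range_subset_range.mpr (by omega)) fun l _ hl => ?_).symm.trans
    (sum_congr rfl fun l _ => ?_)
  · rw [mem_range, not_lt] at hl
    simp [maskEigenvector, Nat.choose_eq_zero_of_lt (Nat.lt_of_succ_le hl)]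
  · simp only [Pi.smul_apply, smul_eq_mul, maskEigenvector, one_pow]
    ring

theorem sum_maskEigenvector (hq0 : ∀ y, numK K d y ≠ 0 → q0 y = 0) :
    ∑ l ∈ range (d + 1), maskEigenvector q0 l = q0 := by
  have h := sum_pow_smul_maskEigenvector q0 1
  simp only [one_pow, one_smul, sub_self] at h
  rw [h]
  funext y
  by_cases hy : numK K d y = 0
  · rw [hy, pow_zero, one_mul, cleanMass_of_numK_eq_zero q0 hy]
  · rw [zero_pow hy, zero_mul, hq0 y hy]

theorem qt_apply (hq0 : ∀ y, numK K d y ≠ 0 → q0 y = 0) (t : ℝ) (y : Fin d → Fin K) :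
    qt K d q0 t y =
      Real.exp (-(t * d)) * (Real.exp t - 1) ^ numK K d y * cleanMass q0 y := by
  have hexp (l : ℕ) : NormedSpace.exp (t • fwdRate K d) *ᵥ maskEigenvector q0 l =
      Real.exp (-(t * d)) • Real.exp t ^ l • maskEigenvector q0 l := by
    rw [Matrix.exp_mulVec_of_mulVec_eq_smul (μ := t * -((d : ℝ) - l)), smul_smul,
      ← Real.exp_nat_mul, ← Real.exp_add]
    · ring_nf
    · rw [smul_mulVec, fwdRate_mulVec_maskEigenvector, smul_smul]
  conv_lhs => rw [qt, ← sum_maskEigenvector q0 hq0]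
  rw [mulVec_sum, sum_congr rfl fun l _ => hexp l,
    ← smul_sum, sum_pow_smul_maskEigenvector, Pi.smul_apply, smul_eq_mul, mul_assoc]

end

theorem score_bound_general (K d : ℕ) [NeZero K] (hK : 2 ≤ K)
    (q0 : (Fin d → Fin K) → ℝ)
    (hq0nonneg : ∀ y, 0 ≤ q0 y)
    (hA2 : ∀ y, 0 < q0 y ↔ numK K d y = 0)
    (s : ℝ) (hs : 0 < s) (y : Fin d → Fin K)
    (i : Fin d) (hi : y i = maskTok K) (k : Fin K) (hk : k ≠ maskTok K) :
    0 < qt K d q0 s y ∧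
    qt K d q0 s (Function.update y i k) / qt K d q0 s y
      ≤ 1 / (Real.exp s - 1) := by
  have hsupp (x : Fin d → Fin K) (hx : numK K d x ≠ 0) : q0 x = 0 :=
    ((hq0nonneg x).lt_or_eq.resolve_left (mt (hA2 x).mp hx)).symm
  have hm : numK K d y = numK K d (update y i k) + 1 := by
    have := numK_pos_of_mask hi
    rw [numK_update_of_mask hi hk]
    omega
  have ha : 0 < Real.exp s - 1 := sub_pos.mpr (Real.one_lt_exp_iff.mpr hs)
  have hS := cleanMass_pos hK hq0nonneg (fun x => (hA2 x).mpr) y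
  have hle := cleanMass_update_le hq0nonneg hi k
  rw [qt_apply q0 hsupp, qt_apply q0 hsupp, hm, pow_succ]
  set c := Real.exp (-(s * d)) * (Real.exp s - 1) ^ numK K d (update y i k)
  refine ⟨by positivity, ?_⟩
  rw [div_le_div_iff₀ (by positivity) ha]
  calc _ = c * (Real.exp s - 1) * cleanMass q0 (update y i k) := by ring
    _ ≤ c * (Real.exp s - 1) * cleanMass q0 y := by gcongr
    _ = _ := by ring

/-- Under Assumption [A2], for every `s > 0` the forward marginal is positive
and the discrete score at a masked coordinate is bounded:
`q_s(y[i→k]) / q_s(y) ≤ 1/(e^s - 1)`. -/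
theorem score_bound (K d : ℕ) [NeZero K] (hK : 2 ≤ K) (hd : 1 ≤ d)
    (q0 : (Fin d → Fin K) → ℝ)
    (hq0nonneg : ∀ y, 0 ≤ q0 y) (hq0sum : ∑ y, q0 y = 1)
    (hA2 : ∀ y, 0 < q0 y ↔ numK K d y = 0)
    (s : ℝ) (hs : 0 < s) (y : Fin d → Fin K)
    (i : Fin d) (hi : y i = maskTok K) (k : Fin K) (hk : k ≠ maskTok K) :
    0 < qt K d q0 s y ∧
    qt K d q0 s (Function.update y i k) / qt K d q0 s y
      ≤ 1 / (Real.exp s - 1) :=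
  score_bound_general K d hK q0 hq0nonneg hA2 s hs y i hi k hk
end

section
/- Under Assumption [A2], for every t ≥ 0 and every integer k with 0 ≤ k ≤ d, the number of mask tokens at forward time t is Binomial(d, 1 − e^{−t}) distributed: ∑_{y ∈ Y : numK(y) = k} q_t(y) = C(d,k) · (1 − e^{−t})^k · e^{−t(d−k)}, where C(d,k) is the binomial coefficient. -/
open Matrix Finset

/-!
Write `M_A` for the matrix sending a state to the state with the coordinates in `A` masked. The
rate matrix is `∑ᵢ (M_{i} - 1)`, and the `M_{i}` are commuting idempotents with
`M_A M_B = M_{A ∪ B}`. Since `exp (t • P) = 1 + (eᵗ - 1) • P` for an idempotent `P`, expanding the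
product of the factors gives `exp (t • R) = e^{-td} ∑_A (eᵗ - 1)^{#A} • M_A`. A state without masks
is sent by `M_A` to a state with exactly `#A` masks, so only the `C(d, k)` sets of size `k`
contribute to the mass of `{numK = k}`, each with weight `e^{-td} (eᵗ - 1)ᵏ`.
-/

open NormedSpace

theorem IsIdempotentElem.exp_smul {A : Type*} [Ring A] [Algebra ℝ A] [TopologicalSpace A]
    [IsTopologicalRing A] [ContinuousSMul ℝ A] [T2Space A] {P : A} (hP : IsIdempotentElem P)
    (t : ℝ) : exp (t • P) = 1 + (Real.exp t - 1) • P := by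
  have hterm : ∀ n : ℕ, ((n.factorial : ℝ)⁻¹) • (t • P) ^ n
      = (t ^ n / n.factorial) • P + if n = 0 then 1 - P else 0 := by
    rintro (_ | n)
    · simp
    · rw [smul_pow, hP.pow_succ_eq, smul_smul, if_neg n.succ_ne_zero, add_zero, inv_mul_eq_div]
  have hsum := ((Real.exp_eq_exp_ℝ ▸ expSeries_div_hasSum_exp t).smul_const P).add
    (hasSum_ite_eq 0 (1 - P))
  rw [exp_eq_tsum ℝ]
  beta_reduce
  rw [tsum_congr hterm, hsum.tsum_eq, sub_smul, one_smul]
  abel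

theorem Matrix.mul_one_submatrix {l m n R : Type*} [Fintype n] [DecidableEq n]
    [NonAssocSemiring R] (M : Matrix m n R) (f : l → n) :
    M * (1 : Matrix n n R).submatrix id f = M.submatrix id f := by
  ext y y'
  simp [mul_apply, one_apply]

section Masking

variable {K d : ℕ} [NeZero K]

def maskOn (A : Finset (Fin d)) (y : Fin d → Fin K) : Fin d → Fin K :=
  A.piecewise (fun _ => maskTok K) y

theorem maskOn_empty : maskOn (K := K) (∅ : Finset (Fin d)) = id :=
  funext fun y => piecewise_empty _ y

theorem maskOn_maskOn (A B : Finset (Fin d)) (y : Fin d → Fin K) :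
    maskOn A (maskOn B y) = maskOn (A ∪ B) y := by
  ext j
  by_cases hA : j ∈ A <;> by_cases hB : j ∈ B <;> simp [maskOn, Finset.piecewise, hA, hB]

theorem numK_maskOn_of_numK_eq_zero {A : Finset (Fin d)} {y : Fin d → Fin K}
    (hy : numK K d y = 0) : numK K d (maskOn A y) = #A := by
  have hy' : ∀ j, y j ≠ maskTok K := by simpa [numK, filter_eq_empty_iff] using hy
  unfold numK
  congr 1
  ext j
  by_cases hj : j ∈ A <;> simp [maskOn, Finset.piecewise, hj, hy' j]

/-- The matrix of `maskOn A` acting on columns, which index the source state as in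
`qt = exp (t • R) *ᵥ q₀`. -/
def maskMatrix (K d : ℕ) [NeZero K] (A : Finset (Fin d)) :
    Matrix (Fin d → Fin K) (Fin d → Fin K) ℝ :=
  (1 : Matrix _ _ ℝ).submatrix id (maskOn A)

theorem maskMatrix_empty : maskMatrix K d ∅ = 1 := by
  rw [maskMatrix, maskOn_empty, submatrix_id_id]

theorem maskMatrix_mul (A B : Finset (Fin d)) :
    maskMatrix K d A * maskMatrix K d B = maskMatrix K d (A ∪ B) := by
  simp only [maskMatrix, mul_one_submatrix, submatrix_submatrix, Function.comp_id]
  simp only [Function.comp_def, maskOn_maskOn]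

theorem commute_maskMatrix (A B : Finset (Fin d)) :
    Commute (maskMatrix K d A) (maskMatrix K d B) := by
  rw [Commute, SemiconjBy, maskMatrix_mul, maskMatrix_mul, union_comm]

theorem maskMatrix_singleton_apply (i : Fin d) (y y' : Fin d → Fin K) :
    maskMatrix K d {i} y y' = if y = Function.update y' i (maskTok K) then 1 else 0 := by
  simp [maskMatrix, maskOn, piecewise_singleton, one_apply]

theorem sum_maskMatrix_singleton_apply_self (y : Fin d → Fin K) :
    ∑ i, maskMatrix K d {i} y y = numK K d y := by
  simp_rw [maskMatrix_singleton_apply, eq_comm (a := y), Function.update_eq_self_iff,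
    eq_comm (a := maskTok K), sum_boole]
  rfl

theorem exists_eq_update_mask_iff {y y' : Fin d → Fin K} (h : y ≠ y') :
    (∃ i, y = Function.update y' i (maskTok K)) ↔
      ham y y' = 1 ∧ ∀ i, y i ≠ y' i → y i = maskTok K := by
  constructor
  · rintro ⟨i, rfl⟩
    have hi : y' i ≠ maskTok K := fun hi => h (by simp [← hi])
    have hdiff : (univ.filter fun j => Function.update y' i (maskTok K) j ≠ y' j) = {i} := by
      ext j
      by_cases hji : j = i
      · simp [hji, hi.symm]
      · simp [hji]
    refine ⟨by rw [ham, hdiff, card_singleton], fun j hj => ?_⟩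
    by_cases hji : j = i
    · simp [hji]
    · simp [hji] at hj
  · rintro ⟨hham, hmask⟩
    obtain ⟨i, hdiff⟩ := card_eq_one.mp hham
    refine ⟨i, funext fun j => ?_⟩
    have hj : y j ≠ y' j ↔ j = i := by simpa using Finset.ext_iff.mp hdiff j
    by_cases hji : j = i
    · subst hji
      simpa using hmask j (hj.mpr rfl)
    · simpa [hji] using mt hj.mp hji

theorem sum_maskMatrix_singleton_apply_of_ne {y y' : Fin d → Fin K} (h : y ≠ y') :
    ∑ i, maskMatrix K d {i} y y' =
      if ∃ i, y = Function.update y' i (maskTok K) then 1 else 0 := by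
  simp_rw [maskMatrix_singleton_apply]
  split_ifs with hex
  · obtain ⟨i, hi⟩ := hex
    -- two different single maskings of `y'` agree only if both leave `y'` unchanged
    have huniq : ∀ j, y = Function.update y' j (maskTok K) ↔ j = i := by
      refine fun j => ⟨fun hj => by_contra fun hji => h ?_, fun hji => hji ▸ hi⟩
      have hyj : y' j = maskTok K := by
        simpa [Function.update_of_ne hji] using (congrFun hi j).symm.trans (congrFun hj j)
      rwa [← hyj, Function.update_eq_self] at hj
    simp [huniq]
  · exact sum_eq_zero fun i _ => if_neg fun hi => hex ⟨i, hi⟩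

theorem fwdRate_eq_sum_maskMatrix :
    fwdRate K d = ∑ i, maskMatrix K d {i} - (d : ℝ) • 1 := by
  ext y y'
  rw [Matrix.sub_apply, Matrix.sum_apply, Matrix.smul_apply, one_apply]
  by_cases h : y = y'
  · subst h
    simp [fwdRate, sum_maskMatrix_singleton_apply_self]
  · simp [fwdRate, h, sum_maskMatrix_singleton_apply_of_ne h, exists_eq_update_mask_iff h]

theorem exp_sum_smul_maskMatrix_singleton (t : ℝ) (s : Finset (Fin d)) :
    exp (∑ i ∈ s, t • maskMatrix K d {i}) =
      ∑ A ∈ s.powerset, (Real.exp t - 1) ^ #A • maskMatrix K d A := by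
  induction s using Finset.induction_on with
  | empty => simp [maskMatrix_empty]
  | insert i s hi ih =>
    have hidem : IsIdempotentElem (maskMatrix K d {i}) := by
      rw [IsIdempotentElem, maskMatrix_mul, union_self]
    have hcomm : Commute (t • maskMatrix K d {i}) (∑ j ∈ s, t • maskMatrix K d {j}) :=
      Commute.sum_right _ _ _ fun j _ => ((commute_maskMatrix _ _).smul_left t).smul_right t
    rw [sum_insert hi, Matrix.exp_add_of_commute _ _ hcomm, ih, hidem.exp_smul,
      sum_powerset_insert hi, add_mul, one_mul, mul_sum]
    refine congrArg _ (sum_congr rfl fun A hA => ?_)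
    have hiA : i ∉ A := fun h => hi (mem_powerset.mp hA h)
    rw [smul_mul_smul_comm, maskMatrix_mul, ← insert_eq, card_insert_of_notMem hiA, pow_succ']

theorem exp_smul_fwdRate (t : ℝ) :
    exp (t • fwdRate K d) =
      Real.exp (-(t * d)) • ∑ A : Finset (Fin d), (Real.exp t - 1) ^ #A • maskMatrix K d A := by
  have hcomm : Commute (∑ i, t • maskMatrix K d {i}) ((-(t * d)) • 1) :=
    (Commute.one_right _).smul_right _
  rw [fwdRate_eq_sum_maskMatrix, smul_sub, smul_sum, smul_smul, sub_eq_add_neg, ← neg_smul,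
    Matrix.exp_add_of_commute _ _ hcomm, exp_sum_smul_maskMatrix_singleton,
    IsIdempotentElem.one.exp_smul, sub_smul, one_smul, add_sub_cancel, mul_smul_comm, mul_one,
    powerset_univ]

theorem sum_maskMatrix_mulVec (A : Finset (Fin d)) (S : Finset (Fin d → Fin K))
    (q : (Fin d → Fin K) → ℝ) :
    ∑ y ∈ S, (maskMatrix K d A *ᵥ q) y = ∑ y, if maskOn A y ∈ S then q y else 0 := by
  simp only [maskMatrix, mulVec, dotProduct, submatrix_apply, one_apply, id, ite_mul, one_mul,
    zero_mul]
  rw [sum_comm]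
  simp

theorem sum_filter_numK_maskMatrix_mulVec {q : (Fin d → Fin K) → ℝ}
    (hq : ∀ y, numK K d y ≠ 0 → q y = 0) (A : Finset (Fin d)) (k : ℕ) :
    ∑ y ∈ univ.filter (fun y => numK K d y = k), (maskMatrix K d A *ᵥ q) y =
      if #A = k then ∑ y, q y else 0 := by
  rw [sum_maskMatrix_mulVec, ite_sum_zero]
  refine sum_congr rfl fun y _ => ?_
  by_cases hy : numK K d y = 0
  · simp [numK_maskOn_of_numK_eq_zero hy]
  · simp [hq y hy]

theorem sum_filter_numK_qt {q0 : (Fin d → Fin K) → ℝ} (hq0 : ∀ y, numK K d y ≠ 0 → q0 y = 0)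
    (t : ℝ) (k : ℕ) :
    ∑ y ∈ univ.filter (fun y => numK K d y = k), qt K d q0 t y =
      Real.exp (-(t * d)) * (d.choose k * (Real.exp t - 1) ^ k) * ∑ y, q0 y := by
  simp only [qt, exp_smul_fwdRate, smul_mulVec, sum_mulVec, Pi.smul_apply, Finset.sum_apply,
    smul_eq_mul, ← mul_sum]
  rw [sum_comm]
  simp only [← mul_sum, sum_filter_numK_maskMatrix_mulVec hq0, mul_ite, mul_zero]
  have hcard : univ.filter (fun A : Finset (Fin d) => #A = k) = powersetCard k univ := by
    ext A
    simp
  rw [← sum_filter, hcard, sum_congr rfl fun A hA => by rw [mem_powersetCard_univ.mp hA],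
    sum_const, card_powersetCard, card_univ, Fintype.card_fin, nsmul_eq_mul]
  ring

end Masking

theorem numK_binomial_general (K d : ℕ) [NeZero K]
    (q0 : (Fin d → Fin K) → ℝ)
    (hq0nonneg : ∀ y, 0 ≤ q0 y) (hq0sum : ∑ y, q0 y = 1)
    (hA2 : ∀ y, 0 < q0 y ↔ numK K d y = 0)
    (t : ℝ) (k : ℕ) :
    ∑ y ∈ Finset.univ.filter (fun y : Fin d → Fin K => numK K d y = k),
        qt K d q0 t y
      = (d.choose k : ℝ) * (1 - Real.exp (-t)) ^ k
          * Real.exp (-t * ((d : ℝ) - (k : ℝ))) := by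
  have hsupp : ∀ y, numK K d y ≠ 0 → q0 y = 0 := fun y hy =>
    le_antisymm (not_lt.mp (mt (hA2 y).mp hy)) (hq0nonneg y)
  have hprob : 1 - Real.exp (-t) = Real.exp (-t) * (Real.exp t - 1) := by
    rw [mul_sub, ← Real.exp_add, neg_add_cancel, Real.exp_zero, mul_one]
  rw [sum_filter_numK_qt hsupp, hq0sum, mul_one, hprob, mul_pow, ← Real.exp_nat_mul,
    show -(t * d) = k * -t + -t * (d - k) by ring, Real.exp_add]
  ring

/-- Under Assumption [A2], the number of mask tokens at forward time `t` follows a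
Binomial(d, 1 - e^{-t}) distribution. -/
theorem numK_binomial (K d : ℕ) [NeZero K] (hK : 2 ≤ K) (hd : 1 ≤ d)
    (q0 : (Fin d → Fin K) → ℝ)
    (hq0nonneg : ∀ y, 0 ≤ q0 y) (hq0sum : ∑ y, q0 y = 1)
    (hA2 : ∀ y, 0 < q0 y ↔ numK K d y = 0)
    (t : ℝ) (ht : 0 ≤ t) (k : ℕ) (hk : k ≤ d) :
    ∑ y ∈ Finset.univ.filter (fun y : Fin d → Fin K => numK K d y = k),
        qt K d q0 t y
      = (d.choose k : ℝ) * (1 - Real.exp (-t)) ^ k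
          * Real.exp (-t * ((d : ℝ) - (k : ℝ))) :=
  numK_binomial_general K d q0 hq0nonneg hq0sum hA2 t k
end

section
/- Under Assumption [A2], for every δ ≥ 0 the total variation distance between the target distribution and the early-stopped forward marginal satisfies TV(q₀, q_δ) := (1/2) ∑_{y ∈ Y} |q₀(y) − q_δ(y)| ≤ 1 − e^{−δ d}. In particular, if 0 < ε < 1 and δ ≤ ε/d, then TV(q₀, q_δ) ≤ ε. -/
open Matrix Finset

/-!
Adding `d • 1` to the rate matrix `R` makes it entrywise nonnegative, so
`exp (δ R) = e^{-δd} exp (δ (R + d • 1))`, and the exponential of a nonnegative matrix dominates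
the identity entrywise. Hence `q_δ ≥ e^{-δd} q₀` pointwise. The columns of `R` sum to zero, so
`exp (δ R)` preserves total mass, and a probability vector dominating `a q₀` is within total
variation `1 - a` of `q₀`. The second claim follows from `1 - e^{-x} ≤ x`.
-/

open NormedSpace

namespace Matrix

variable {ι : Type*} [Fintype ι] [DecidableEq ι]

theorem hasSum_exp_apply (A : Matrix ι ι ℝ) (i j : ι) :
    HasSum (fun n : ℕ => (n.factorial⁻¹ : ℝ) * (A ^ n) i j) (exp A i j) := by
  -- matrices carry no global norm; any choice induces the product topology used by `exp`
  let : NormedRing (Matrix ι ι ℝ) := Matrix.linftyOpNormedRing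
  let : NormedAlgebra ℝ (Matrix ι ι ℝ) := Matrix.linftyOpNormedAlgebra
  exact Pi.hasSum.mp (Pi.hasSum.mp (exp_series_hasSum_exp' (𝕂 := ℝ) A) i) j

theorem exp_add_smul_one (A : Matrix ι ι ℝ) (c : ℝ) :
    exp (A + c • 1) = Real.exp c • exp A := by
  have hexp_scalar : exp (c • 1 : Matrix ι ι ℝ) = Real.exp c • 1 := by
    rw [smul_one_eq_diagonal, exp_diagonal, Pi.exp_def, ← Real.exp_eq_exp_ℝ,
      smul_one_eq_diagonal]
  rw [exp_add_of_commute _ _ ((Commute.one_right A).smul_right c), hexp_scalar,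
    Matrix.mul_smul, mul_one]

section Nonneg

variable {A : Matrix ι ι ℝ} (hA : ∀ i j, 0 ≤ A i j)
include hA

theorem exp_apply_nonneg (i j : ι) : 0 ≤ exp A i j :=
  (hasSum_exp_apply A i j).nonneg fun n => mul_nonneg (by positivity) (pow_apply_nonneg hA n i j)

theorem one_le_exp_apply_self (i : ι) : 1 ≤ exp A i i := by
  simpa using le_hasSum (hasSum_exp_apply A i i) 0
    fun n _ => mul_nonneg (by positivity) (pow_apply_nonneg hA n i i)

theorem apply_le_exp_mulVec_apply {v : ι → ℝ} (hv : ∀ i, 0 ≤ v i) (i : ι) :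
    v i ≤ (exp A *ᵥ v) i :=
  calc v i ≤ exp A i i * v i := le_mul_of_one_le_left (hv i) (one_le_exp_apply_self hA i)
    _ ≤ ∑ j, exp A i j * v j :=
      single_le_sum (f := fun j => exp A i j * v j)
        (fun j _ => mul_nonneg (exp_apply_nonneg hA i j) (hv j)) (mem_univ i)

end Nonneg

section ColumnSums

variable {A : Matrix ι ι ℝ} {c : ℝ} (hA : ∀ j, ∑ i, A i j = c)
include hA

theorem sum_pow_apply_of_sum_apply_eq (n : ℕ) (j : ι) : ∑ i, (A ^ n) i j = c ^ n := by
  induction n generalizing j with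
  | zero => simp [one_apply]
  | succ n ih =>
    simp only [pow_succ', mul_apply]
    rw [sum_comm]
    simp_rw [← sum_mul, hA, ← mul_sum, ih]

theorem sum_exp_apply_of_sum_apply_eq (j : ι) : ∑ i, exp A i j = Real.exp c := by
  refine (hasSum_sum fun i _ => hasSum_exp_apply A i j).unique ?_
  simp_rw [← mul_sum, sum_pow_apply_of_sum_apply_eq hA]
  simpa [Real.exp_eq_exp_ℝ] using exp_series_hasSum_exp' (𝕂 := ℝ) c

end ColumnSums

end Matrix

theorem sum_abs_sub_le_of_mul_le {ι : Type*} [Fintype ι] {p q : ι → ℝ} {a : ℝ}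
    (hp : ∀ i, 0 ≤ p i) (ha : a ≤ 1) (hpq : ∀ i, a * p i ≤ q i)
    (hsum : ∑ i, q i = ∑ i, p i) :
    ∑ i, |p i - q i| ≤ 2 * (1 - a) * ∑ i, p i :=
  calc ∑ i, |p i - q i| ≤ ∑ i, ((1 - a) * p i + (q i - a * p i)) :=
        sum_le_sum fun i _ => abs_le.mpr ⟨by nlinarith [hp i, hpq i], by nlinarith [hp i, hpq i]⟩
    _ = 2 * (1 - a) * ∑ i, p i := by
        rw [sum_add_distrib, sum_sub_distrib, ← mul_sum, ← mul_sum, hsum]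
        ring

section MaskedDiffusion

variable {K d : ℕ} [NeZero K]

theorem ham_eq_one_and_masks_iff {y z : Fin d → Fin K} :
    (ham y z = 1 ∧ ∀ i, y i ≠ z i → y i = maskTok K) ↔
      ∃ i, z i ≠ maskTok K ∧ y = Function.update z i (maskTok K) := by
  simp only [ham, card_eq_one, Function.eq_update_iff]
  constructor
  · rintro ⟨⟨i, hi⟩, hmask⟩
    have hdiff : ∀ j, y j ≠ z j ↔ j = i := fun j => by
      simpa using congrArg (j ∈ ·) hi
    have hyi := hmask i ((hdiff i).mpr rfl)
    exact ⟨i, fun h => (hdiff i).mpr rfl (hyi.trans h.symm), hyi,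
      fun j hj => not_not.mp fun h => hj ((hdiff j).mp h)⟩
  · rintro ⟨i, hzi, hyi, hy⟩
    refine ⟨⟨i, ?_⟩, fun j hj => ?_⟩
    · ext j
      by_cases hji : j = i
      · simp [hji, hyi, Ne.symm hzi]
      · simp [hji, hy j hji]
    · by_contra hne
      exact hj (hy j fun h => hne (h ▸ hyi))

theorem fwdRate_apply (y z : Fin d → Fin K) :
    fwdRate K d y z = (if y = z then -((d : ℝ) - numK K d z) else 0) +
      if ∃ i, z i ≠ maskTok K ∧ y = Function.update z i (maskTok K) then 1 else 0 := by
  simp only [fwdRate, ← ham_eq_one_and_masks_iff]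
  split_ifs <;> simp_all [ham]

theorem sum_fwdRate_apply_left (z : Fin d → Fin K) : ∑ y, fwdRate K d y z = 0 := by
  set unmasked := univ.filter fun i => z i ≠ maskTok K
  have hsteps : (univ.filter fun y => ∃ i, z i ≠ maskTok K ∧
      y = Function.update z i (maskTok K)) = unmasked.image (Function.update z · (maskTok K)) := by
    ext y; simp [unmasked, eq_comm]
  have hinj : Set.InjOn (Function.update z · (maskTok K)) unmasked := by
    intro i hi j _ hij
    by_contra hne
    refine (mem_filter.mp hi).2 ?_
    simpa [Function.update_of_ne hne] using (congrFun hij i).symm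
  have hcount : (numK K d z : ℝ) + unmasked.card = d := by
    norm_cast
    simpa [numK, unmasked] using card_filter_add_card_filter_not (s := univ) fun i => z i = maskTok K
  simp only [fwdRate_apply, sum_add_distrib, sum_ite_eq', mem_univ, if_true, sum_boole, hsteps,
    card_image_of_injOn hinj]
  linarith

theorem fwdRate_add_smul_one_nonneg (y z : Fin d → Fin K) :
    0 ≤ (fwdRate K d + (d : ℝ) • 1) y z := by
  simp only [Matrix.add_apply, Matrix.smul_apply, one_apply, fwdRate]
  split_ifs <;> norm_num

theorem sum_qt (q0 : (Fin d → Fin K) → ℝ) (t : ℝ) : ∑ y, qt K d q0 t y = ∑ y, q0 y := by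
  have hcol : ∀ z, ∑ y, (t • fwdRate K d) y z = 0 := fun z => by
    simp only [Matrix.smul_apply, smul_eq_mul, ← mul_sum, sum_fwdRate_apply_left, mul_zero]
  simp only [qt, mulVec, dotProduct]
  rw [sum_comm]
  simp_rw [← sum_mul, sum_exp_apply_of_sum_apply_eq hcol, Real.exp_zero, one_mul]

theorem exp_neg_mul_le_qt {q0 : (Fin d → Fin K) → ℝ} (hq0 : ∀ y, 0 ≤ q0 y) {t : ℝ} (ht : 0 ≤ t)
    (y : Fin d → Fin K) : Real.exp (-(t * d)) * q0 y ≤ qt K d q0 t y := by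
  have hshift : exp (t • fwdRate K d) =
      Real.exp (-(t * d)) • exp (t • (fwdRate K d + (d : ℝ) • 1)) := by
    rw [smul_add, smul_smul, exp_add_smul_one, smul_smul, ← Real.exp_add, neg_add_cancel,
      Real.exp_zero, one_smul]
  rw [qt, hshift, smul_mulVec, Pi.smul_apply, smul_eq_mul]
  exact mul_le_mul_of_nonneg_left (apply_le_exp_mulVec_apply
    (fun y z => mul_nonneg ht (fwdRate_add_smul_one_nonneg y z)) hq0 y) (Real.exp_pos _).le

end MaskedDiffusion

theorem tv_early_stopping_general (K d : ℕ) [NeZero K]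
    (q0 : (Fin d → Fin K) → ℝ)
    (hq0nonneg : ∀ y, 0 ≤ q0 y) (hq0sum : ∑ y, q0 y = 1) :
    (∀ δ : ℝ, 0 ≤ δ →
      (1 / 2) * ∑ y, |q0 y - qt K d q0 δ y| ≤ 1 - Real.exp (-(δ * d))) ∧
    (∀ ε δ : ℝ, 0 < ε → ε < 1 → 0 ≤ δ → δ ≤ ε / d →
      (1 / 2) * ∑ y, |q0 y - qt K d q0 δ y| ≤ ε) := by
  have tv_le : ∀ δ : ℝ, 0 ≤ δ →
      (1 / 2) * ∑ y, |q0 y - qt K d q0 δ y| ≤ 1 - Real.exp (-(δ * d)) := by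
    intro δ hδ
    have h := sum_abs_sub_le_of_mul_le hq0nonneg
      (Real.exp_le_one_iff.mpr (neg_nonpos.mpr (by positivity)))
      (exp_neg_mul_le_qt hq0nonneg hδ) (sum_qt q0 δ)
    rw [hq0sum] at h
    linarith
  refine ⟨tv_le, fun ε δ hε _ hδ hδε => (tv_le δ hδ).trans ?_⟩
  calc 1 - Real.exp (-(δ * d)) ≤ δ * d := by linarith [Real.add_one_le_exp (-(δ * d))]
    _ ≤ ε := mul_le_of_le_div₀ hε.le (Nat.cast_nonneg d) hδε

/-- Under Assumption [A2], the total variation distance between the target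
distribution `q₀` and the early-stopped forward marginal `q_δ` is at most
`1 - e^{-δd}`; in particular it is at most `ε` whenever `δ ≤ ε/d`. -/
theorem tv_early_stopping (K d : ℕ) [NeZero K] (hK : 2 ≤ K) (hd : 1 ≤ d)
    (q0 : (Fin d → Fin K) → ℝ)
    (hq0nonneg : ∀ y, 0 ≤ q0 y) (hq0sum : ∑ y, q0 y = 1)
    (hA2 : ∀ y, 0 < q0 y ↔ numK K d y = 0) :
    (∀ δ : ℝ, 0 ≤ δ →
      (1 / 2) * ∑ y, |q0 y - qt K d q0 δ y| ≤ 1 - Real.exp (-(δ * d))) ∧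
    (∀ ε δ : ℝ, 0 < ε → ε < 1 → 0 ≤ δ → δ ≤ ε / d →
      (1 / 2) * ∑ y, |q0 y - qt K d q0 δ y| ≤ ε) :=
  tv_early_stopping_general K d q0 hq0nonneg hq0sum
end
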